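/- Let G be a finite simple (theta, even wheel)-free graph, let H be a hole of G, and let v1, v2 ∈ V(G) \ V(H) be adjacent vertices such that each of v1 and v2 has at least two pairwise nonadjacent neighbors in H. Then v1 and v2 have a common neighbor in H. -/

import Mathlib

open SimpleGraph

namespace Paper

variable {V : Type*}

open Fin.NatCast Fin.CommRing

/-- `G` contains an induced subgraph isomorphic to `H`. -/
def ContainsInduced {W : Type*} (G : SimpleGraph V) (H : SimpleGraph W) : Prop :=
  ∃ S : Set V, Nonempty (G.induce S ≃g H)

/-- `G` is `H`-free: no induced subgraph of `G` is isomorphic to `H`. -/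
def Free {W : Type*} (G : SimpleGraph V) (H : SimpleGraph W) : Prop :=
  ¬ ContainsInduced G H

/-- The diamond: `K₄` minus an edge. -/
def diamond : SimpleGraph (Fin 4) :=
  (⊤ : SimpleGraph (Fin 4)).deleteEdges {s(0, 1)}

/-- `S` induces a hole (an induced cycle of length at least 4) in `G`. -/
def IsHoleSet (G : SimpleGraph V) (S : Set V) : Prop :=
  ∃ n : ℕ, 4 ≤ n ∧ Nonempty (G.induce S ≃g cycleGraph n)

/-- `G` contains an even hole. -/
def HasEvenHole (G : SimpleGraph V) : Prop :=
  ∃ S : Set V, ∃ n : ℕ, 4 ≤ n ∧ Even n ∧ Nonempty (G.induce S ≃g cycleGraph n)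

/-- The union of the vertex sets of two walks induces a hole in `G`. -/
def PairHole (G : SimpleGraph V) {a b c d : V} (P : G.Walk a b) (Q : G.Walk c d) : Prop :=
  IsHoleSet G {v | v ∈ P.support ∨ v ∈ Q.support}

/-- `G` contains a theta. -/
def HasTheta (G : SimpleGraph V) : Prop :=
  ∃ (a b : V) (P₁ P₂ P₃ : G.Walk a b),
    a ≠ b ∧ ¬ G.Adj a b ∧
    P₁.IsPath ∧ P₂.IsPath ∧ P₃.IsPath ∧
    PairHole G P₁ P₂ ∧ PairHole G P₁ P₃ ∧ PairHole G P₂ P₃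

/-- `G` contains a pyramid. -/
def HasPyramid (G : SimpleGraph V) : Prop :=
  ∃ (a b₁ b₂ b₃ : V) (P₁ : G.Walk a b₁) (P₂ : G.Walk a b₂) (P₃ : G.Walk a b₃),
    G.Adj b₁ b₂ ∧ G.Adj b₁ b₃ ∧ G.Adj b₂ b₃ ∧
    a ≠ b₁ ∧ a ≠ b₂ ∧ a ≠ b₃ ∧
    P₁.IsPath ∧ P₂.IsPath ∧ P₃.IsPath ∧
    PairHole G P₁ P₂ ∧ PairHole G P₁ P₃ ∧ PairHole G P₂ P₃

/-- `G` contains a prism. -/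
def HasPrism (G : SimpleGraph V) : Prop :=
  ∃ (a₁ a₂ a₃ b₁ b₂ b₃ : V) (P₁ : G.Walk a₁ b₁) (P₂ : G.Walk a₂ b₂) (P₃ : G.Walk a₃ b₃),
    G.Adj a₁ a₂ ∧ G.Adj a₁ a₃ ∧ G.Adj a₂ a₃ ∧
    G.Adj b₁ b₂ ∧ G.Adj b₁ b₃ ∧ G.Adj b₂ b₃ ∧
    ({a₁, a₂, a₃} : Set V) ∩ {b₁, b₂, b₃} = ∅ ∧
    P₁.IsPath ∧ P₂.IsPath ∧ P₃.IsPath ∧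
    PairHole G P₁ P₂ ∧ PairHole G P₁ P₃ ∧ PairHole G P₂ P₃

/-- The neighbors of `v` inside the set `S`. -/
def nbrsIn (G : SimpleGraph V) (S : Set V) (v : V) : Set V :=
  {u | u ∈ S ∧ G.Adj v u}

/-- `(S, v)` is a wheel of `G`: `S` is a hole and `v ∉ S` has at least 3 neighbors in `S`. -/
def IsWheel (G : SimpleGraph V) (S : Set V) (v : V) : Prop :=
  IsHoleSet G S ∧ v ∉ S ∧ 3 ≤ (nbrsIn G S v).ncard

/-- `(S, v)` is an even wheel of `G`. -/
def IsEvenWheel (G : SimpleGraph V) (S : Set V) (v : V) : Prop :=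
  IsWheel G S v ∧ Even (nbrsIn G S v).ncard

def HasWheel (G : SimpleGraph V) : Prop := ∃ (S : Set V) (v : V), IsWheel G S v

def HasEvenWheel (G : SimpleGraph V) : Prop := ∃ (S : Set V) (v : V), IsEvenWheel G S v

/-- A bug: a wheel whose hub has exactly three neighbors in the hole,
exactly two of which are adjacent. -/
def IsBug (G : SimpleGraph V) (S : Set V) (v : V) : Prop :=
  IsWheel G S v ∧ ∃ x y z : V, x ≠ y ∧ x ≠ z ∧ y ≠ z ∧
    nbrsIn G S v = {x, y, z} ∧ G.Adj x y ∧ ¬ G.Adj x z ∧ ¬ G.Adj y z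

/-- A twin wheel: the neighbors of the hub in the hole induce a path of length two. -/
def IsTwinWheel (G : SimpleGraph V) (S : Set V) (v : V) : Prop :=
  IsWheel G S v ∧ ∃ x y z : V, x ≠ y ∧ x ≠ z ∧ y ≠ z ∧
    nbrsIn G S v = {x, y, z} ∧ G.Adj x y ∧ G.Adj y z ∧ ¬ G.Adj x z

/-- A universal wheel: the hub is adjacent to every vertex of the hole. -/
def IsUniversalWheel (G : SimpleGraph V) (S : Set V) (v : V) : Prop :=
  IsWheel G S v ∧ ∀ u ∈ S, G.Adj v u

/-- `G` is a member of the class 𝒞 of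
(C4, diamond, theta, pyramid, prism, even wheel)-free graphs. -/
def InC (G : SimpleGraph V) : Prop :=
  Free G (cycleGraph 4) ∧ Free G diamond ∧ ¬ HasTheta G ∧ ¬ HasPyramid G ∧
    ¬ HasPrism G ∧ ¬ HasEvenWheel G

/-- The independence number of `G`. -/
noncomputable def indepNum (G : SimpleGraph V) : ℕ :=
  sSup {n | ∃ S : Set V, (S.Pairwise fun u v => ¬ G.Adj u v) ∧ S.ncard = n}

/-- The clique number of `G`. -/
noncomputable def cliqueNum (G : SimpleGraph V) : ℕ :=
  sSup {n | ∃ S : Set V, G.IsClique S ∧ S.ncard = n}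

/-- The (vertex) clique cover number of `G`: the minimum number of parts in a
partition of the vertex set of `G` into cliques. -/
noncomputable def cliqueCoverNum (G : SimpleGraph V) : ℕ :=
  sInf {n | ∃ F : Finset (Set V), F.card = n ∧ (∀ C ∈ F, G.IsClique C) ∧
    ∀ v : V, ∃! C : Set V, C ∈ F ∧ v ∈ C}

/-- A tree decomposition of `G`. -/
structure TreeDecomp (G : SimpleGraph V) where
  ι : Type
  tree : SimpleGraph ι
  tree_acyclic : tree.IsAcyclic
  tree_connected : tree.Connected
  bag : ι → Set V
  bag_cover : ∀ v : V, ∃ t, v ∈ bag t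
  bag_edge : ∀ ⦃u v : V⦄, G.Adj u v → ∃ t, u ∈ bag t ∧ v ∈ bag t
  bag_subtree : ∀ v : V, (tree.induce {t | v ∈ bag t}).Connected

/-- The treewidth of `G`: the minimum over tree decompositions of (max bag size − 1). -/
noncomputable def treewidth (G : SimpleGraph V) : ℕ :=
  sInf {k | ∃ D : TreeDecomp G, ∀ t, (D.bag t).ncard ≤ k + 1}

/-- The tree independence number of `G`. -/
noncomputable def treeIndepNum (G : SimpleGraph V) : ℕ :=
  sInf {k | ∃ D : TreeDecomp G, ∀ t, indepNum (G.induce (D.bag t)) ≤ k}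

/-- The tree clique cover number of `G`. -/
noncomputable def treeCliqueCoverNum (G : SimpleGraph V) : ℕ :=
  sInf {k | ∃ D : TreeDecomp G, ∀ t, cliqueCoverNum (G.induce (D.bag t)) ≤ k}

/-- A weight function on a finite graph: values in `[0,1]` summing to `1`. -/
def IsWeightFn [Fintype V] (w : V → ℝ) : Prop :=
  (∀ v, 0 ≤ w v ∧ w v ≤ 1) ∧ ∑ v, w v = 1

/-- The weight of a set of vertices. -/
noncomputable def wSet (w : V → ℝ) (S : Set V) : ℝ := ∑ᶠ x ∈ S, w x

/-- `X` is a `(w, c)`-balanced separator of `G`: every connected component of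
`G − X` has weight at most `c`. -/
def IsBalancedSep (G : SimpleGraph V) (w : V → ℝ) (c : ℝ) (X : Set V) : Prop :=
  ∀ D : (G.induce Xᶜ).ConnectedComponent, wSet w (Subtype.val '' D.supp) ≤ c

/-- `G` has a clique cutset: a clique `C` such that `G − C` is disconnected. -/
def HasCliqueCutset (G : SimpleGraph V) : Prop :=
  ∃ C : Set V, G.IsClique C ∧ ¬ (G.induce Cᶜ).Preconnected

/-- The closed neighborhood of `v`. -/
def closedNbhd (G : SimpleGraph V) (v : V) : Set V := insert v (G.neighborSet v)

/-- The (open) neighborhood of a set `S`: vertices outside `S` with a neighbor in `S`. -/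
def setNbhd (G : SimpleGraph V) (S : Set V) : Set V :=
  {v | v ∉ S ∧ ∃ u ∈ S, G.Adj v u}

/-- `(A, C, B)` is a separation of `G`. -/
def IsSeparation (G : SimpleGraph V) (A C B : Set V) : Prop :=
  A ∪ C ∪ B = Set.univ ∧ Disjoint A C ∧ Disjoint A B ∧ Disjoint C B ∧
    ∀ a ∈ A, ∀ b ∈ B, ¬ G.Adj a b

/-- `v` is a balanced vertex with respect to `w`: every connected component of
`G − N[v]` has weight at most `1/2`. -/
def IsBalancedVtx (G : SimpleGraph V) (w : V → ℝ) (v : V) : Prop :=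
  ∀ D : (G.induce (closedNbhd G v)ᶜ).ConnectedComponent,
    wSet w (Subtype.val '' D.supp) ≤ 1 / 2


/-- values of Fin-subtraction of casts -/
lemma sub_val' {n : ℕ} [NeZero n] (a b : ℕ) (ha : a < n) (hb : b < n) :
    (((a : Fin n) - (b : Fin n))).val = if b ≤ a then a - b else n + a - b := by
  rw [Fin.sub_def]
  simp only [Fin.val_cast_of_lt ha, Fin.val_cast_of_lt hb]
  rcases le_or_gt b a with h | h
  · have : n - b + a = n + (a - b) := by omega
    rw [if_pos h, this, Nat.add_mod_left, Nat.mod_eq_of_lt (by omega)]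
  · rw [if_neg (by omega), Nat.mod_eq_of_lt (by omega)]
    omega

/-- cycle adjacency between casts of naturals below n -/
lemma cycAdj_nat {n : ℕ} [NeZero n] (hn : 2 ≤ n) (a b : ℕ) (ha : a < n) (hb : b < n) :
    (cycleGraph n).Adj (a : Fin n) (b : Fin n) ↔
      (a + 1 = b ∨ b + 1 = a ∨ (a = 0 ∧ b = n - 1) ∨ (b = 0 ∧ a = n - 1)) := by
  rw [cycleGraph_adj', sub_val' a b ha hb, sub_val' b a hb ha]
  rcases le_or_gt b a with h | h
  · rw [if_pos h]
    rcases eq_or_lt_of_le h with rfl | h'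
    · simp; omega
    · rw [if_neg (by omega)]; omega
  · rw [if_neg (by omega), if_pos (le_of_lt h)]; omega

lemma cycAdj_add {n : ℕ} [NeZero n] (c i j : Fin n) :
    (cycleGraph n).Adj (i + c) (j + c) ↔ (cycleGraph n).Adj i j := by
  rw [cycleGraph_adj', cycleGraph_adj', add_sub_add_right_eq_sub, add_sub_add_right_eq_sub]

/-- Walk along a sequence of consecutively adjacent vertices. -/
def walkOf (G : SimpleGraph V) (g : ℕ → V) :
    (L : ℕ) → (∀ i < L, G.Adj (g i) (g (i + 1))) → G.Walk (g 0) (g L)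
  | 0, _ => Walk.nil
  | (L + 1), h => (walkOf G g L (fun i hi => h i (by omega))).concat (h L (by omega))

lemma support_walkOf (G : SimpleGraph V) (g : ℕ → V) (L : ℕ)
    (h : ∀ i < L, G.Adj (g i) (g (i + 1))) :
    (walkOf G g L h).support = (List.range (L + 1)).map g := by
  induction L with
  | zero => simp [walkOf, List.range_succ]
  | succ L ih =>
      rw [walkOf, Walk.support_concat, ih, List.range_succ,
        List.map_append, List.map_singleton]
      rw [List.range_succ (n := L + 1), List.map_append, List.range_succ (n := L),
        List.map_append, List.map_singleton, List.map_singleton]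

lemma mem_support_walkOf {G : SimpleGraph V} {g : ℕ → V} {L : ℕ}
    {h : ∀ i < L, G.Adj (g i) (g (i + 1))} {w : V} :
    w ∈ (walkOf G g L h).support ↔ ∃ t ≤ L, g t = w := by
  rw [support_walkOf]
  simp only [List.mem_map, List.mem_range]
  constructor
  · rintro ⟨t, ht, rfl⟩; exact ⟨t, by omega, rfl⟩
  · rintro ⟨t, ht, rfl⟩; exact ⟨t, by omega, rfl⟩

lemma isPath_walkOf {G : SimpleGraph V} {g : ℕ → V} {L : ℕ}
    {h : ∀ i < L, G.Adj (g i) (g (i + 1))}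
    (hinj : ∀ s ≤ L, ∀ t ≤ L, g s = g t → s = t) :
    (walkOf G g L h).IsPath := by
  rw [Walk.isPath_def, support_walkOf]
  refine List.Nodup.map_on ?_ List.nodup_range
  intro s hs t ht hst
  simp only [List.mem_range] at hs ht
  exact hinj s (by omega) t (by omega) hst

/-- A cyclic embedding of `cycleGraph n` as an induced subgraph of `G`. -/
def CycEmb (G : SimpleGraph V) (n : ℕ) (f : Fin n → V) : Prop :=
  Function.Injective f ∧ ∀ i j, G.Adj (f i) (f j) ↔ (cycleGraph n).Adj i j

lemma holeSet_of_cycEmb {G : SimpleGraph V} {n : ℕ} {f : Fin n → V}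
    (hn : 4 ≤ n) (hf : CycEmb G n f) : IsHoleSet G (Set.range f) := by
  obtain ⟨hinj, hadj⟩ := hf
  refine ⟨n, hn, ⟨?_⟩⟩
  refine RelIso.symm ⟨Equiv.ofInjective f hinj, ?_⟩
  intro i j
  simp only [Equiv.ofInjective_apply, comap_adj, Function.Embedding.coe_subtype]
  exact hadj i j

lemma cycEmb_of_holeSet {G : SimpleGraph V} {S : Set V} (hS : IsHoleSet G S) :
    ∃ (n : ℕ) (f : Fin n → V), 4 ≤ n ∧ CycEmb G n f ∧ Set.range f = S := by
  obtain ⟨n, hn, ⟨e⟩⟩ := hS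
  refine ⟨n, fun i => (e.symm i : V), hn, ⟨?_, ?_⟩, ?_⟩
  · intro i j hij
    have := e.symm.injective (Subtype.val_injective hij)
    exact this
  · intro i j
    have := e.symm.map_rel_iff (a := i) (b := j)
    simpa only [comap_adj, Function.Embedding.coe_subtype] using this
  · ext w
    constructor
    · rintro ⟨i, rfl⟩; exact (e.symm i).2
    · intro hw; exact ⟨e ⟨w, hw⟩, by simp⟩

/-- The arc from `f x` to `f (x+d)` together with apex `u`, as a cycle of length `d+2`. -/
def arcFun {n : ℕ} [NeZero n] (f : Fin n → V) (x : Fin n) (u : V) (d : ℕ) : Fin (d + 2) → V :=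
  fun i => if i.val ≤ d then f (x + ((i.val : ℕ) : Fin n)) else u

lemma mem_range_arcFun {n : ℕ} [NeZero n] {f : Fin n → V} {x : Fin n} {u : V} {d : ℕ} {w : V} :
    w ∈ Set.range (arcFun f x u d) ↔
      (∃ t : ℕ, t ≤ d ∧ w = f (x + ((t : ℕ) : Fin n))) ∨ w = u := by
  constructor
  · rintro ⟨i, rfl⟩
    by_cases h : i.val ≤ d
    · exact Or.inl ⟨i.val, h, by simp [arcFun, h]⟩
    · exact Or.inr (by simp [arcFun, h])
  · rintro (⟨t, ht, rfl⟩ | rfl)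
    · exact ⟨⟨t, by omega⟩, by simp [arcFun, ht]⟩
    · exact ⟨⟨d + 1, by omega⟩, by simp [arcFun]⟩

lemma arc_cycEmb {G : SimpleGraph V} {n : ℕ} [NeZero n] {f : Fin n → V} (hf : CycEmb G n f)
    {x : Fin n} {u : V} {d : ℕ} (hd2 : 2 ≤ d) (hdn : d + 2 ≤ n)
    (hu : u ∉ Set.range f)
    (hux : G.Adj u (f x)) (huy : G.Adj u (f (x + ((d : ℕ) : Fin n))))
    (hmid : ∀ t : ℕ, 0 < t → t < d → ¬ G.Adj u (f (x + ((t : ℕ) : Fin n)))) :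
    CycEmb G (d + 2) (arcFun f x u d) := by
  obtain ⟨hinj, hadj⟩ := hf
  -- adjacency between two arc vertices
  have harc : ∀ a b : ℕ, a ≤ d → b ≤ d →
      (G.Adj (f (x + ((a : ℕ) : Fin n))) (f (x + ((b : ℕ) : Fin n))) ↔
        (a + 1 = b ∨ b + 1 = a)) := by
    intro a b ha hb
    rw [hadj]
    have h1 : x + ((a : ℕ) : Fin n) = ((a : ℕ) : Fin n) + x := by ring
    have h2 : x + ((b : ℕ) : Fin n) = ((b : ℕ) : Fin n) + x := by ring
    rw [h1, h2, cycAdj_add, cycAdj_nat (by omega) a b (by omega) (by omega)]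
    omega
  -- adjacency between apex and arc vertices
  have hapex : ∀ a : ℕ, a ≤ d →
      (G.Adj u (f (x + ((a : ℕ) : Fin n))) ↔ (a = 0 ∨ a = d)) := by
    intro a ha
    constructor
    · intro h
      by_contra hc
      push_neg at hc
      exact hmid a (by omega) (by omega) h
    · rintro (rfl | rfl)
      · simpa using hux
      · exact huy
  constructor
  · intro i j hij
    by_cases hi : i.val ≤ d <;> by_cases hj : j.val ≤ d <;>
      simp only [arcFun, if_pos, if_neg, hi, hj, if_true, if_false] at hij
    · have := hinj hij
      have : ((i.val : ℕ) : Fin n) = ((j.val : ℕ) : Fin n) := by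
        have := add_left_cancel this
        exact this
      have : i.val = j.val := by
        have h' := congrArg Fin.val this
        rwa [Fin.val_cast_of_lt (by omega), Fin.val_cast_of_lt (by omega)] at h'
      exact Fin.ext this
    · exact absurd ⟨_, hij⟩ hu
    · exact absurd ⟨_, hij.symm⟩ hu
    · exact Fin.ext (by omega)
  · intro i j
    have hcyc : (cycleGraph (d + 2)).Adj i j ↔
        (i.val + 1 = j.val ∨ j.val + 1 = i.val ∨ (i.val = 0 ∧ j.val = d + 1) ∨
          (j.val = 0 ∧ i.val = d + 1)) := by
      haveI : NeZero (d + 2) := ⟨by omega⟩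
      have h1 : i = ((i.val : ℕ) : Fin (d + 2)) := (Fin.cast_val_eq_self i).symm
      have h2 : j = ((j.val : ℕ) : Fin (d + 2)) := (Fin.cast_val_eq_self j).symm
      rw [h1, h2, cycAdj_nat (by omega) i.val j.val (by omega) (by omega)]
      simp only [← h1, ← h2]
      omega
    rw [hcyc]
    by_cases hi : i.val ≤ d <;> by_cases hj : j.val ≤ d <;>
      simp only [arcFun, hi, hj, if_true, if_false]
    · rw [harc i.val j.val hi hj]; omega
    · have hj' : j.val = d + 1 := by omega
      have := hapex i.val hi
      constructor
      · intro h; have := this.1 h.symm; omega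
      · intro h
        have : i.val = 0 ∨ i.val = d := by omega
        exact (this.elim (fun h0 => (hapex i.val hi).2 (Or.inl h0)) fun h0 =>
          (hapex i.val hi).2 (Or.inr h0)).symm
    · have hi' : i.val = d + 1 := by omega
      have := hapex j.val hj
      constructor
      · intro h; have := this.1 h; omega
      · intro h
        have : j.val = 0 ∨ j.val = d := by omega
        exact this.elim (fun h0 => (hapex j.val hj).2 (Or.inl h0)) fun h0 =>
          (hapex j.val hj).2 (Or.inr h0)
    · constructor
      · intro h; exact absurd rfl (G.ne_of_adj h)
      · intro h; omega

lemma cast_inj_lt {n : ℕ} [NeZero n] {s t : ℕ} (hs : s < n) (ht : t < n)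
    (h : ((s : ℕ) : Fin n) = ((t : ℕ) : Fin n)) : s = t := by
  have := congrArg Fin.val h
  rwa [Fin.val_cast_of_lt hs, Fin.val_cast_of_lt ht] at this

lemma theta_of_two {G : SimpleGraph V} {n : ℕ} {f : Fin n → V} (hn : 4 ≤ n)
    (hf : CycEmb G n f) {u : V} (hu : u ∉ Set.range f) {a b : Fin n} (hab : a ≠ b)
    (hnadj : ¬ (cycleGraph n).Adj a b) (hua : G.Adj u (f a)) (hub : G.Adj u (f b))
    (honly : ∀ i, G.Adj u (f i) → i = a ∨ i = b) : HasTheta G := by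
  haveI : NeZero n := ⟨by omega⟩
  obtain ⟨hinj, hadj⟩ := id hf
  set k : ℕ := (b - a).val with hk
  have hkn : k < n := (b - a).isLt
  have hcast : ((k : ℕ) : Fin n) = b - a := Fin.cast_val_eq_self _
  have hk0 : k ≠ 0 := by
    intro h
    apply hab
    have : b - a = 0 := by rw [← hcast, h, Nat.cast_zero]
    have := sub_eq_zero.mp this
    exact this.symm
  have hk1 : k ≠ 1 := by
    intro h
    exact hnadj (cycleGraph_adj'.mpr (Or.inr (by rw [← hk, h])))
  have hknm : k ≠ n - 1 := by
    intro h
    apply hnadj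
    apply cycleGraph_adj'.mpr (Or.inl ?_)
    have h1 : ((k : ℕ) : Fin n) + ((1 : ℕ) : Fin n) = 0 := by
      rw [← Nat.cast_add, h, show n - 1 + 1 = n by omega, Fin.natCast_self]
    have h2 : a - b = ((1 : ℕ) : Fin n) := by
      have := eq_neg_of_add_eq_zero_right h1
      rw [hcast] at this
      rw [← neg_sub b a, ← this]
    rw [h2, Fin.val_cast_of_lt (by omega)]
  have hk2 : 2 ≤ k := by omega
  have hkn2 : k ≤ n - 2 := by omega
  have hba : a + ((k : ℕ) : Fin n) = b := by rw [hcast]; ring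
  have hnk : ((n - k : ℕ) : Fin n) = a - b := by
    have h1 : ((k : ℕ) : Fin n) + ((n - k : ℕ) : Fin n) = 0 := by
      rw [← Nat.cast_add, show k + (n - k) = n by omega, Fin.natCast_self]
    have h2 := eq_neg_of_add_eq_zero_right h1
    rw [h2, hcast, neg_sub]
  have hnb : b + ((n - k : ℕ) : Fin n) = a := by rw [hnk]; ring
  -- consecutive adjacency along the cycle
  have hone : (((1 : ℕ) : Fin n)).val = 1 := Fin.val_cast_of_lt (by omega)
  have consec : ∀ (x : Fin n) (t : ℕ),
      G.Adj (f (x + ((t : ℕ) : Fin n))) (f (x + ((t + 1 : ℕ) : Fin n))) := by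
    intro x t
    apply (hadj _ _).mpr
    apply cycleGraph_adj'.mpr (Or.inr ?_)
    have : x + ((t + 1 : ℕ) : Fin n) - (x + ((t : ℕ) : Fin n)) = ((1 : ℕ) : Fin n) := by
      push_cast
      ring
    rw [this, hone]
  -- the two arcs as walks
  set g1 : ℕ → V := fun t => f (a + ((t : ℕ) : Fin n)) with hg1
  set g2 : ℕ → V := fun t => f (b + ((t : ℕ) : Fin n)) with hg2
  have hadj1 : ∀ i < k, G.Adj (g1 i) (g1 (i + 1)) := fun i _ => consec a i
  have hadj2 : ∀ i < n - k, G.Adj (g2 i) (g2 (i + 1)) := fun i _ => consec b i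
  have h10 : g1 0 = f a := by simp [hg1]
  have h1k : g1 k = f b := by rw [hg1]; simp only []; rw [hba]
  have h20 : g2 0 = f b := by simp [hg2]
  have h2k : g2 (n - k) = f a := by rw [hg2]; simp only []; rw [hnb]
  set P1 : G.Walk (f a) (f b) := (walkOf G g1 k hadj1).copy h10 h1k with hP1
  set P2 : G.Walk (f a) (f b) := ((walkOf G g2 (n - k) hadj2).copy h20 h2k).reverse with hP2
  set P3 : G.Walk (f a) (f b) := Walk.cons hua.symm (Walk.cons hub Walk.nil) with hP3
  have hmem1 : ∀ w, w ∈ P1.support ↔ ∃ t ≤ k, f (a + ((t : ℕ) : Fin n)) = w := by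
    intro w
    rw [hP1, Walk.support_copy, mem_support_walkOf]
  have hmem2 : ∀ w, w ∈ P2.support ↔ ∃ t ≤ n - k, f (b + ((t : ℕ) : Fin n)) = w := by
    intro w
    rw [hP2, Walk.support_reverse, List.mem_reverse, Walk.support_copy, mem_support_walkOf]
  have hmem3 : ∀ w, w ∈ P3.support ↔ (w = f a ∨ w = u ∨ w = f b) := by
    intro w
    rw [hP3]
    simp [Walk.support_cons, eq_comm]
  have hfa_ne_u : f a ≠ u := fun h => hu ⟨a, h⟩
  have hfb_ne_u : f b ≠ u := fun h => hu ⟨b, h⟩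
  have hfab : f a ≠ f b := fun h => hab (hinj h)
  -- paths
  have hp1 : P1.IsPath := by
    rw [hP1, Walk.isPath_copy]
    apply isPath_walkOf
    intro s hs t ht hst
    apply cast_inj_lt (n := n) (by omega) (by omega)
    exact add_left_cancel (hinj hst)
  have hp2 : P2.IsPath := by
    rw [hP2]
    apply Walk.IsPath.reverse
    rw [Walk.isPath_copy]
    apply isPath_walkOf
    intro s hs t ht hst
    apply cast_inj_lt (n := n) (by omega) (by omega)
    exact add_left_cancel (hinj hst)
  have hp3 : P3.IsPath := by
    rw [hP3, Walk.isPath_def]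
    simp only [Walk.support_cons, Walk.support_nil, List.nodup_cons, List.mem_cons,
      List.not_mem_nil, List.mem_singleton, or_false, List.nodup_nil, and_true, not_or]
    exact ⟨⟨hfa_ne_u, hfab⟩, Ne.symm hfb_ne_u, not_false⟩
  have hnadjG : ¬ G.Adj (f a) (f b) := fun h => hnadj ((hadj a b).mp h)
  refine ⟨f a, f b, P1, P2, P3, hfab, hnadjG, hp1, hp2, hp3, ?_, ?_, ?_⟩
  · -- P1 P2 : the full hole
    have hset : {v | v ∈ P1.support ∨ v ∈ P2.support} = Set.range f := by
      ext w
      simp only [Set.mem_setOf_eq, hmem1, hmem2]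
      constructor
      · rintro (⟨t, ht, rfl⟩ | ⟨t, ht, rfl⟩) <;> exact ⟨_, rfl⟩
      · rintro ⟨i, rfl⟩
        set t : ℕ := (i - a).val with htdef
        have htn : t < n := (i - a).isLt
        have hit : a + ((t : ℕ) : Fin n) = i := by rw [htdef, Fin.cast_val_eq_self]; ring
        by_cases hc : t ≤ k
        · exact Or.inl ⟨t, hc, by rw [hit]⟩
        · refine Or.inr ⟨t - k, by omega, ?_⟩
          have hbt : b + ((t - k : ℕ) : Fin n) = i := by
            rw [← hba, ← hit, Nat.cast_sub (by omega)]
            ring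
          rw [hbt]
    rw [PairHole, hset]
    exact holeSet_of_cycEmb hn hf
  · -- P1 P3: arc a..b plus u
    have hmid1 : ∀ t : ℕ, 0 < t → t < k → ¬ G.Adj u (f (a + ((t : ℕ) : Fin n))) := by
      intro t ht0 htk hadju
      rcases honly _ hadju with h | h
      · have h0 : ((t : ℕ) : Fin n) = 0 :=
          calc ((t : ℕ) : Fin n) = (a + ((t : ℕ) : Fin n)) - a := by ring
          _ = a - a := by rw [h]
          _ = 0 := sub_self a
        have ht' : t = 0 := by
          have hv := congrArg Fin.val h0
          rwa [Fin.val_cast_of_lt (by omega), Fin.val_zero] at hv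
        omega
      · have h0 : ((t : ℕ) : Fin n) = ((k : ℕ) : Fin n) := by
          have h1 : a + ((t : ℕ) : Fin n) = a + ((k : ℕ) : Fin n) := by rw [h, hba]
          exact add_left_cancel h1
        have := cast_inj_lt (n := n) (by omega) (by omega) h0
        omega
    have hemb := arc_cycEmb hf hk2 (by omega) hu hua (by rw [hba]; exact hub) hmid1
    have hset : {v | v ∈ P1.support ∨ v ∈ P3.support} = Set.range (arcFun f a u k) := by
      ext w
      simp only [Set.mem_setOf_eq, hmem1, hmem3, mem_range_arcFun]
      constructor
      · rintro (⟨t, ht, hw⟩ | h)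
        · exact Or.inl ⟨t, ht, hw.symm⟩
        · rcases h with rfl | rfl | rfl
          · exact Or.inl ⟨0, by omega, by simp⟩
          · exact Or.inr rfl
          · exact Or.inl ⟨k, le_refl k, by rw [hba]⟩
      · rintro (⟨t, ht, hw⟩ | rfl)
        · exact Or.inl ⟨t, ht, hw.symm⟩
        · exact Or.inr (Or.inr (Or.inl rfl))
    rw [PairHole, hset]
    exact holeSet_of_cycEmb (by omega) hemb
  · -- P2 P3: arc b..a plus u
    have hmid2 : ∀ t : ℕ, 0 < t → t < n - k → ¬ G.Adj u (f (b + ((t : ℕ) : Fin n))) := by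
      intro t ht0 htk hadju
      rcases honly _ hadju with h | h
      · have h0 : ((t : ℕ) : Fin n) = ((n - k : ℕ) : Fin n) := by
          have h1 : b + ((t : ℕ) : Fin n) = b + ((n - k : ℕ) : Fin n) := by rw [h, hnb]
          exact add_left_cancel h1
        have := cast_inj_lt (n := n) (by omega) (by omega) h0
        omega
      · have h0 : ((t : ℕ) : Fin n) = 0 :=
          calc ((t : ℕ) : Fin n) = (b + ((t : ℕ) : Fin n)) - b := by ring
          _ = b - b := by rw [h]
          _ = 0 := sub_self b
        have ht' : t = 0 := by
          have hv := congrArg Fin.val h0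
          rwa [Fin.val_cast_of_lt (by omega), Fin.val_zero] at hv
        omega
    have hemb := arc_cycEmb hf (by omega) (by omega) hu hub (by rw [hnb]; exact hua) hmid2
    have hset : {v | v ∈ P2.support ∨ v ∈ P3.support} =
        Set.range (arcFun f b u (n - k)) := by
      ext w
      simp only [Set.mem_setOf_eq, hmem2, hmem3, mem_range_arcFun]
      constructor
      · rintro (⟨t, ht, hw⟩ | h)
        · exact Or.inl ⟨t, ht, hw.symm⟩
        · rcases h with rfl | rfl | rfl
          · exact Or.inl ⟨n - k, le_refl _, by rw [hnb]⟩
          · exact Or.inr rfl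
          · exact Or.inl ⟨0, by omega, by simp⟩
      · rintro (⟨t, ht, hw⟩ | rfl)
        · exact Or.inl ⟨t, ht, hw.symm⟩
        · exact Or.inr (Or.inr (Or.inl rfl))
    rw [PairHole, hset]
    exact holeSet_of_cycEmb (by omega) hemb

lemma nbrs_ncard {G : SimpleGraph V} {n : ℕ} {f : Fin n → V} (hinj : Function.Injective f)
    (v : V) [DecidablePred fun i : Fin n => G.Adj v (f i)] :
    (nbrsIn G (Set.range f) v).ncard
      = (Finset.univ.filter fun i => G.Adj v (f i)).card := by
  have h1 : nbrsIn G (Set.range f) v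
      = f '' ↑(Finset.univ.filter fun i => G.Adj v (f i)) := by
    ext w
    simp only [nbrsIn, Set.mem_setOf_eq, Set.mem_image, Finset.coe_filter, Finset.mem_univ,
      true_and]
    constructor
    · rintro ⟨⟨i, rfl⟩, hadj⟩; exact ⟨i, hadj, rfl⟩
    · rintro ⟨i, hadj, rfl⟩; exact ⟨⟨i, rfl⟩, hadj⟩
  rw [h1, Set.ncard_image_of_injective _ hinj, Set.ncard_coe_finset]

lemma evenWheel_of {G : SimpleGraph V} {n : ℕ} {f : Fin n → V} (hn : 4 ≤ n)
    (hf : CycEmb G n f) (v : V) (hv : v ∉ Set.range f)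
    [DecidablePred fun i : Fin n => G.Adj v (f i)]
    (h3 : 3 ≤ (Finset.univ.filter fun i => G.Adj v (f i)).card)
    (he : Even (Finset.univ.filter fun i => G.Adj v (f i)).card) : HasEvenWheel G :=
  ⟨Set.range f, v, ⟨holeSet_of_cycEmb hn hf, hv, by rw [nbrs_ncard hf.1]; exact h3⟩,
    by rw [nbrs_ncard hf.1]; exact he⟩

/-- A vertex with two nonadjacent neighbours on a hole has an odd number, at least 3,
of neighbours on the hole. -/
lemma odd_card_nbrs {G : SimpleGraph V} {n : ℕ} {f : Fin n → V} (hn : 4 ≤ n)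
    (hf : CycEmb G n f) (hth : ¬ HasTheta G) (hew : ¬ HasEvenWheel G)
    {v : V} (hv : v ∉ Set.range f) {i j : Fin n} (hij : i ≠ j)
    (hnc : ¬ (cycleGraph n).Adj i j) (hi : G.Adj v (f i)) (hj : G.Adj v (f j))
    [DecidablePred fun t : Fin n => G.Adj v (f t)] :
    Odd (Finset.univ.filter fun t : Fin n => G.Adj v (f t)).card ∧
      3 ≤ (Finset.univ.filter fun t : Fin n => G.Adj v (f t)).card := by
  classical
  set s := Finset.univ.filter fun t : Fin n => G.Adj v (f t) with hs
  have hsub : ({i, j} : Finset (Fin n)) ⊆ s := by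
    intro t ht
    simp only [Finset.mem_insert, Finset.mem_singleton] at ht
    rcases ht with rfl | rfl <;> simp [hs, hi, hj]
  have hpair : ({i, j} : Finset (Fin n)).card = 2 := Finset.card_pair hij
  have h2 : 2 ≤ s.card := hpair ▸ Finset.card_le_card hsub
  have h3 : 3 ≤ s.card := by
    by_contra hc
    have hcard : s.card ≤ ({i, j} : Finset (Fin n)).card := by omega
    have heq : ({i, j} : Finset (Fin n)) = s := Finset.eq_of_subset_of_card_le hsub hcard
    apply hth
    refine theta_of_two hn hf hv hij hnc hi hj ?_
    intro t ht
    have : t ∈ s := by simp [hs, ht]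
    rw [← heq] at this
    simpa using this
  refine ⟨?_, h3⟩
  rcases Nat.even_or_odd s.card with he | ho
  · exact absurd (evenWheel_of hn hf v hv h3 he) hew
  · exact ho

/-- On an interval with endpoints in `B`, outside of which `A` avoids `B`,
with an odd number of `A`-elements inside, there is a `B`-gap containing an odd
number of `A`-elements. -/
lemma odd_gap (A B : ℕ → Prop) [DecidablePred A] [DecidablePred B]
    (hAB : ∀ r, B r → ¬ A r) :
    ∀ m a b, b - a ≤ m → a < b → B a → B b →
      Odd ((Finset.Ioo a b).filter A).card →
      ∃ p q, a ≤ p ∧ p < q ∧ q ≤ b ∧ B p ∧ B q ∧ (∀ r ∈ Finset.Ioo p q, ¬ B r) ∧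
        Odd ((Finset.Ioo p q).filter A).card := by
  intro m
  induction m with
  | zero => intro a b hm hab _ _ _; omega
  | succ m ih =>
      intro a b hm hab hBa hBb hodd
      by_cases hmid : ∃ r ∈ Finset.Ioo a b, B r
      · obtain ⟨r, hr, hBr⟩ := hmid
        rw [Finset.mem_Ioo] at hr
        have hsplit : Finset.Ioo a b = Finset.Ioo a r ∪ Finset.Ico r b := by
          ext t
          simp only [Finset.mem_union, Finset.mem_Ioo, Finset.mem_Ico]
          omega
        have hdisj : Disjoint (Finset.Ioo a r) (Finset.Ico r b) := by
          rw [Finset.disjoint_left]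
          intro t ht ht'
          rw [Finset.mem_Ioo] at ht
          rw [Finset.mem_Ico] at ht'
          omega
        have hIco : Finset.Ico r b = insert r (Finset.Ioo r b) :=
          (Finset.Ioo_insert_left hr.2).symm
        have hfIco : (Finset.Ico r b).filter A = (Finset.Ioo r b).filter A := by
          rw [hIco, Finset.filter_insert, if_neg (hAB r hBr)]
        have hcard : ((Finset.Ioo a b).filter A).card
            = ((Finset.Ioo a r).filter A).card + ((Finset.Ioo r b).filter A).card := by
          rw [hsplit, Finset.filter_union,
            Finset.card_union_of_disjoint (Finset.disjoint_filter_filter hdisj), hfIco]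
        rw [hcard] at hodd
        rcases Nat.even_or_odd ((Finset.Ioo a r).filter A).card with he1 | ho1
        · have ho2 : Odd ((Finset.Ioo r b).filter A).card := by
            rcases Nat.even_or_odd ((Finset.Ioo r b).filter A).card with he2 | ho2
            · exact absurd (he1.add he2) (Nat.not_even_iff_odd.mpr hodd)
            · exact ho2
          obtain ⟨p, q, h1, h2, h3, h4⟩ := ih r b (by omega) hr.2 hBr hBb ho2
          exact ⟨p, q, by omega, h2, h3, h4⟩
        · obtain ⟨p, q, h1, h2, h3, h4⟩ := ih a r (by omega) hr.1 hBa hBr ho1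
          exact ⟨p, q, h1, h2, by omega, h4⟩
      · push_neg at hmid
        exact ⟨a, b, le_refl a, hab, le_refl b, hBa, hBb, hmid, hodd⟩

theorem statement14 {V : Type} [Fintype V] (G : SimpleGraph V)
    (hth : ¬ HasTheta G) (hew : ¬ HasEvenWheel G)
    (S : Set V) (hS : IsHoleSet G S) (v₁ v₂ : V)
    (hv₁ : v₁ ∉ S) (hv₂ : v₂ ∉ S) (hadj : G.Adj v₁ v₂)
    (h₁ : ∃ x ∈ S, ∃ y ∈ S, x ≠ y ∧ ¬ G.Adj x y ∧ G.Adj v₁ x ∧ G.Adj v₁ y)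
    (h₂ : ∃ x ∈ S, ∃ y ∈ S, x ≠ y ∧ ¬ G.Adj x y ∧ G.Adj v₂ x ∧ G.Adj v₂ y) :
    ∃ z ∈ S, G.Adj v₁ z ∧ G.Adj v₂ z := by
  classical
  by_contra hcom
  push_neg at hcom
  obtain ⟨n, f0, hn, hf0, hrange0⟩ := cycEmb_of_holeSet hS
  haveI : NeZero n := ⟨by omega⟩
  obtain ⟨x2, hx2S, y2, hy2S, hxy2ne, hxy2nadj, hv2x, hv2y⟩ := h₂
  obtain ⟨c, hc⟩ : x2 ∈ Set.range f0 := by rw [hrange0]; exact hx2S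
  -- rotate the hole so that a neighbour of v₂ is at position 0
  set f : Fin n → V := fun i => f0 (i + c) with hfdef
  have hf : CycEmb G n f := by
    obtain ⟨hinj0, hadj0⟩ := hf0
    constructor
    · intro i j hij
      exact add_right_cancel (hinj0 hij)
    · intro i j
      rw [hfdef]
      simp only []
      rw [hadj0, cycAdj_add]
  have hrange : Set.range f = S := by
    rw [← hrange0]
    ext w
    constructor
    · rintro ⟨i, rfl⟩; exact ⟨i + c, rfl⟩
    · rintro ⟨i, rfl⟩; exact ⟨i - c, by rw [hfdef]; simp only []; rw [sub_add_cancel]⟩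
  have hv₁' : v₁ ∉ Set.range f := by rw [hrange]; exact hv₁
  have hv₂' : v₂ ∉ Set.range f := by rw [hrange]; exact hv₂
  have hmemS : ∀ i : Fin n, f i ∈ S := by
    intro i; rw [← hrange]; exact ⟨i, rfl⟩
  have hf0' : f 0 = x2 := by rw [hfdef]; simp only []; rw [zero_add, hc]
  have hB0' : G.Adj v₂ (f 0) := by rw [hf0']; exact hv2x
  -- index versions of the nonadjacent neighbour pairs
  obtain ⟨x1, hx1S, y1, hy1S, hxy1ne, hxy1nadj, hv1x, hv1y⟩ := h₁
  obtain ⟨i₁, hi₁⟩ : x1 ∈ Set.range f := by rw [hrange]; exact hx1S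
  obtain ⟨j₁, hj₁⟩ : y1 ∈ Set.range f := by rw [hrange]; exact hy1S
  obtain ⟨j₂, hj₂⟩ : y2 ∈ Set.range f := by rw [hrange]; exact hy2S
  have h1odd := odd_card_nbrs hn hf hth hew hv₁' (i := i₁) (j := j₁)
    (fun h => hxy1ne (by rw [← hi₁, ← hj₁, h]))
    (fun h => hxy1nadj (by rw [← hi₁, ← hj₁]; exact (hf.2 _ _).mpr h))
    (by rw [hi₁]; exact hv1x) (by rw [hj₁]; exact hv1y)
  have h2odd := odd_card_nbrs hn hf hth hew hv₂' (i := (0 : Fin n)) (j := j₂)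
    (fun h => hxy2ne (by rw [← hf0', ← hj₂, h]))
    (fun h => hxy2nadj (by rw [← hf0', ← hj₂]; exact (hf.2 _ _).mpr h))
    hB0' (by rw [hj₂]; exact hv2y)
  -- the two neighbourhoods as predicates on ℕ
  set A : ℕ → Prop := fun r => G.Adj v₁ (f ((r : ℕ) : Fin n)) with hA
  set B : ℕ → Prop := fun r => G.Adj v₂ (f ((r : ℕ) : Fin n)) with hB
  have hAB : ∀ r, B r → ¬ A r := fun r hBr hAr => hcom _ (hmemS _) hAr hBr
  have hB0 : B 0 := by rw [hB]; simp only [Nat.cast_zero]; exact hB0'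
  have hBn : B n := by rw [hB]; simp only [Fin.natCast_self]; exact hB0'
  -- transfer the count of v₁-neighbours
  have hcount : ((Finset.Ioo 0 n).filter A).card
      = (Finset.univ.filter fun t : Fin n => G.Adj v₁ (f t)).card := by
    apply Finset.card_bij (fun r _ => ((r : ℕ) : Fin n))
    · intro r hr
      rw [Finset.mem_filter] at hr ⊢
      exact ⟨Finset.mem_univ _, hr.2⟩
    · intro r hr r' hr' hrr
      rw [Finset.mem_filter, Finset.mem_Ioo] at hr hr'
      exact cast_inj_lt hr.1.2 hr'.1.2 hrr
    · intro t ht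
      rw [Finset.mem_filter] at ht
      refine ⟨t.val, ?_, Fin.cast_val_eq_self t⟩
      rw [Finset.mem_filter, Finset.mem_Ioo]
      have htA : A t.val := by rw [hA]; simp only [Fin.cast_val_eq_self]; exact ht.2
      refine ⟨⟨?_, t.isLt⟩, htA⟩
      by_contra h0
      have ht0 : t = 0 := by
        apply Fin.ext
        simp only [Fin.val_zero]
        omega
      exact hAB 0 hB0 (by rw [hA]; simp only [Nat.cast_zero]; rw [← ht0]; exact ht.2)
  have hoddA : Odd ((Finset.Ioo 0 n).filter A).card := by
    rw [hcount]; exact h1odd.1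
  obtain ⟨p, q, hp0, hpq, hqn, hBp, hBq, hnoB, hoddgap⟩ :=
    odd_gap A B hAB n 0 n (by omega) (by omega) hB0 hBn hoddA
  set d : ℕ := q - p with hd
  set k : ℕ := ((Finset.Ioo p q).filter A).card with hk
  have hk1 : 1 ≤ k := by
    rcases hoddgap with ⟨c', hc'⟩; omega
  have hd2 : 2 ≤ d := by
    by_contra hdc
    have : Finset.Ioo p q = ∅ := by
      ext t; simp only [Finset.mem_Ioo, Finset.notMem_empty, iff_false]; omega
    rw [hk, this] at hk1
    simp at hk1
  -- d ≤ n - 2, else v₂ would have at most 2 neighbours on the hole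
  have hdn : d + 2 ≤ n := by
    by_contra hdc
    have hsub : (Finset.univ.filter fun t : Fin n => G.Adj v₂ (f t))
        ⊆ {((p : ℕ) : Fin n), ((q : ℕ) : Fin n)} := by
      intro t ht
      rw [Finset.mem_filter] at ht
      have hBt : B t.val := by rw [hB]; simp only [Fin.cast_val_eq_self]; exact ht.2
      have htn : t.val < n := t.isLt
      rcases lt_or_ge p t.val with h1 | h1
      · rcases lt_or_ge t.val q with h2 | h2
        · exact absurd hBt (hnoB t.val (Finset.mem_Ioo.mpr ⟨h1, h2⟩))
        · -- q ≤ t.val < n, q - p = d ≥ n - 1, so t.val = q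
          have : t.val = q := by omega
          simp only [Finset.mem_insert, Finset.mem_singleton]
          right
          rw [← this, Fin.cast_val_eq_self]
      · -- t.val ≤ p
        simp only [Finset.mem_insert, Finset.mem_singleton]
        rcases Nat.eq_or_lt_of_le h1 with h2 | h2
        · left; rw [← h2, Fin.cast_val_eq_self]
        · -- t.val < p : then p ≥ 1, q ≥ n, so q = n and t.val = 0 imposs or...
          have hq : q = n := by omega
          have ht0 : t.val = 0 := by omega
          right
          rw [hq, Fin.natCast_self]
          apply Fin.ext
          simp only [Fin.val_zero]
          omega
    have hle := Finset.card_le_card hsub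
    have : ({((p : ℕ) : Fin n), ((q : ℕ) : Fin n)} : Finset (Fin n)).card ≤ 2 := by
      apply le_trans (Finset.card_insert_le _ _)
      simp
    have h3 := h2odd.2
    omega
  -- build the arc-hole through v₂
  have hcastq : (((p : ℕ) : Fin n)) + ((d : ℕ) : Fin n) = ((q : ℕ) : Fin n) := by
    rw [← Nat.cast_add]
    congr 1
    omega
  have hux : G.Adj v₂ (f ((p : ℕ) : Fin n)) := hBp
  have huy : G.Adj v₂ (f (((p : ℕ) : Fin n) + ((d : ℕ) : Fin n))) := by
    rw [hcastq]; exact hBq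
  have hmid : ∀ t : ℕ, 0 < t → t < d →
      ¬ G.Adj v₂ (f (((p : ℕ) : Fin n) + ((t : ℕ) : Fin n))) := by
    intro t ht0 htd hadj'
    apply hnoB (p + t) (Finset.mem_Ioo.mpr ⟨by omega, by omega⟩)
    show G.Adj v₂ (f (((p + t : ℕ)) : Fin n))
    rw [Nat.cast_add]
    exact hadj'
  have hemb := arc_cycEmb hf hd2 hdn hv₂' hux huy hmid
  set g : Fin (d + 2) → V := arcFun f ((p : ℕ) : Fin n) v₂ d with hg
  have hv₁g : v₁ ∉ Set.range g := by
    rw [hg]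
    intro hmem
    rcases mem_range_arcFun.mp hmem with ⟨t, ht, hw⟩ | hw
    · exact hv₁' (hw ▸ ⟨_, rfl⟩)
    · exact G.ne_of_adj hadj hw
  -- neighbours of v₁ on the arc-hole
  set I1 : Finset (Fin (d + 2)) := Finset.univ.filter fun i => G.Adj v₁ (g i) with hI1def
  have hglast : g (Fin.last (d + 1)) = v₂ := by
    rw [hg, arcFun]
    simp only [Fin.val_last]
    rw [if_neg (by omega)]
  have hgval : ∀ i : Fin (d + 2), i.val ≤ d →
      g i = f (((p : ℕ) : Fin n) + ((i.val : ℕ) : Fin n)) := by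
    intro i hi
    rw [hg, arcFun, if_pos hi]
  set e' : ℕ → Fin (d + 2) := fun r => (((r - p : ℕ)) : Fin (d + 2)) with he'
  have hI1 : I1 = insert (Fin.last (d + 1)) (((Finset.Ioo p q).filter A).image e') := by
    ext i
    simp only [hI1def, Finset.mem_filter, Finset.mem_univ, true_and, Finset.mem_insert,
      Finset.mem_image]
    constructor
    · intro hi
      by_cases hiv : i.val ≤ d
      · rw [hgval i hiv] at hi
        have hiv0 : i.val ≠ 0 := by
          intro h0
          rw [h0] at hi
          simp only [Nat.cast_zero, add_zero] at hi
          exact hAB p hBp hi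
        have hivd : i.val ≠ d := by
          intro h0
          rw [h0, hcastq] at hi
          exact hAB q hBq hi
        right
        refine ⟨p + i.val, ⟨Finset.mem_Ioo.mpr ⟨by omega, by omega⟩, ?_⟩, ?_⟩
        · show G.Adj v₁ (f (((p + i.val : ℕ)) : Fin n))
          rw [Nat.cast_add]
          exact hi
        · rw [he']
          simp only []
          rw [show p + i.val - p = i.val by omega, Fin.cast_val_eq_self]
      · left
        apply Fin.ext
        rw [Fin.val_last]
        omega
    · intro hi
      rcases hi with rfl | ⟨r, hr, rfl⟩
      · rw [hglast]; exact hadj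
      · obtain ⟨hr1, hr2⟩ := hr
        rw [Finset.mem_Ioo] at hr1
        have hrp : r - p < d + 2 := by omega
        have hval : (e' r).val = r - p := by
          rw [he']; exact Fin.val_cast_of_lt hrp
        rw [hgval _ (by rw [hval]; omega)]
        rw [hval]
        have : (((p : ℕ) : Fin n)) + (((r - p : ℕ)) : Fin n) = ((r : ℕ) : Fin n) := by
          rw [← Nat.cast_add]
          congr 1
          omega
        rw [this]
        exact hr2
  have hlast_notmem : Fin.last (d + 1) ∉ ((Finset.Ioo p q).filter A).image e' := by
    intro hmem
    rw [Finset.mem_image] at hmem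
    obtain ⟨r, hr, hr'⟩ := hmem
    rw [Finset.mem_filter, Finset.mem_Ioo] at hr
    have := congrArg Fin.val hr'
    rw [he'] at this
    simp only [Fin.val_last] at this
    rw [Fin.val_cast_of_lt (show r - p < d + 2 by omega)] at this
    omega
  have hinje : Set.InjOn e' ((Finset.Ioo p q).filter A) := by
    intro r hr r' hr' hrr
    simp only [Finset.coe_filter, Set.mem_setOf_eq, Finset.mem_Ioo] at hr hr'
    rw [he'] at hrr
    have := cast_inj_lt (n := d + 2) (show r - p < d + 2 by omega)
      (show r' - p < d + 2 by omega) hrr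
    omega
  have hI1card : I1.card = k + 1 := by
    rw [hI1, Finset.card_insert_of_notMem hlast_notmem, Finset.card_image_of_injOn hinje,
      ← hk]
  -- case analysis on k
  rcases Nat.lt_or_ge k 2 with hksmall | hkbig
  · -- k = 1 : theta
    have hkone : k = 1 := by omega
    obtain ⟨r0, hr0⟩ := Finset.card_eq_one.mp
      (show ((Finset.Ioo p q).filter A).card = 1 by rw [← hk]; exact hkone)
    have hr0mem : r0 ∈ (Finset.Ioo p q).filter A := by rw [hr0]; exact Finset.mem_singleton_self r0
    rw [Finset.mem_filter, Finset.mem_Ioo] at hr0mem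
    set j0 : Fin (d + 2) := e' r0 with hj0
    have hj0val : j0.val = r0 - p := by
      rw [hj0, he']; exact Fin.val_cast_of_lt (by omega)
    have hlastcast : Fin.last (d + 1) = (((d + 1 : ℕ)) : Fin (d + 2)) := by
      apply Fin.ext
      rw [Fin.val_last, Fin.val_cast_of_lt (by omega)]
    have hI1pair : I1 = {j0, Fin.last (d + 1)} := by
      rw [hI1, hr0, Finset.image_singleton, ← hj0]
      exact Finset.pair_comm _ _
    apply hth
    refine theta_of_two (n := d + 2) (by omega) hemb hv₁g (a := j0) (b := Fin.last (d + 1))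
      ?_ ?_ ?_ ?_ ?_
    · intro h
      have := congrArg Fin.val h
      rw [hj0val, Fin.val_last] at this
      omega
    · rw [hlastcast, hj0, he']
      rw [cycAdj_nat (by omega) (r0 - p) (d + 1) (by omega) (by omega)]
      omega
    · have : j0 ∈ I1 := by rw [hI1pair]; simp
      rw [hI1def, Finset.mem_filter] at this
      exact this.2
    · rw [hglast]; exact hadj
    · intro i hi
      have : i ∈ I1 := by rw [hI1def, Finset.mem_filter]; exact ⟨Finset.mem_univ _, hi⟩
      rw [hI1pair] at this
      simpa using this
  · -- k ≥ 3 : even wheel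
    have hk3 : 3 ≤ k := by
      rcases hoddgap with ⟨c', hc'⟩; omega
    apply hew
    apply evenWheel_of (n := d + 2) (by omega) hemb v₁ hv₁g
    · rw [← hI1def, hI1card]; omega
    · rw [← hI1def, hI1card]
      rcases hoddgap with ⟨c', hc'⟩
      exact ⟨c' + 1, by omega⟩


end Paper
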